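/- For 1 ≤ p < ∞ and any sequence (X_n) of Banach spaces, the thickness constant of Y = ℓ_p(X_n) satisfies T(Y) ≥ 2^{1/p}. -/

import Mathlib

open scoped ENNReal NNReal

/-- The thickness constant `T(X)`: the infimum of `ε > 0` such that finitely many closed
`ε`-balls centered at unit vectors cover the closed unit ball of `X`. -/
noncomputable def thickness (X : Type*) [NormedAddCommGroup X] : ℝ :=
  sInf {ε : ℝ | 0 < ε ∧ ∃ F : Finset X, (∀ x ∈ F, ‖x‖ = 1) ∧
    ∀ y : X, ‖y‖ ≤ 1 → ∃ x ∈ F, ‖y - x‖ ≤ ε}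

/-- Whitley's thickness constant `T_W(X)`: the infimum of `ε > 0` such that there is a finite
`ε`-net consisting of unit vectors for the unit sphere of `X`. -/
noncomputable def whitleyThickness (X : Type*) [NormedAddCommGroup X] : ℝ :=
  sInf {ε : ℝ | 0 < ε ∧ ∃ F : Finset X, (∀ x ∈ F, ‖x‖ = 1) ∧
    ∀ y : X, ‖y‖ = 1 → ∃ x ∈ F, ‖y - x‖ ≤ ε}

/-!
Let `F` be a finite set of unit vectors whose `ε`-balls cover the unit ball of `ℓ_p(X_n)`, and
let `eₙ` be a unit vector of `ℓ_p` supported on the `n`-th coordinate. For a fixed unit vector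
`x`, the coordinates `xₙ` tend to `0`, so `‖eₙ - x‖ᵖ = ‖eₙ(n) - xₙ‖ᵖ + (1 - ‖xₙ‖ᵖ) → 2`. As `F`
is finite, for large `n` every point of `F` is at distance almost `2^{1/p}` from `eₙ`, so
`ε ≥ 2^{1/p}`.
-/

open Filter Topology

theorem le_thickness {X : Type*} [NormedAddCommGroup X] {c : ℝ} {x₀ : X} (hx₀ : ‖x₀‖ = 1)
    (h : ∀ ε > 0, ∀ F : Finset X, (∀ x ∈ F, ‖x‖ = 1) →
      (∀ y : X, ‖y‖ ≤ 1 → ∃ x ∈ F, ‖y - x‖ ≤ ε) → c ≤ ε) :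
    c ≤ thickness X := by
  refine le_csInf ⟨2, two_pos, {x₀}, by simpa using hx₀, fun y hy => ⟨x₀, by simp, ?_⟩⟩ ?_
  · calc ‖y - x₀‖ ≤ ‖y‖ + ‖x₀‖ := norm_sub_le _ _
      _ ≤ 2 := by linarith
  · rintro ε ⟨hε, F, hF, hcover⟩
    exact h ε hε F hF hcover

namespace lp

variable {α : Type*} {E : α → Type*} [∀ i, NormedAddCommGroup (E i)] {p : ℝ≥0∞}

theorem tendsto_norm_apply_cofinite [Fact (1 ≤ p)] (hp : p ≠ ⊤) (f : lp E p) :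
    Tendsto (fun i => ‖f i‖) cofinite (𝓝 0) := by
  classical
  have h := (lp.hasSum_single hp f).summable.tendsto_cofinite_zero.norm
  have hp₀ : 0 < p := zero_lt_one.trans_le Fact.out
  simpa only [lp.norm_single hp₀, norm_zero] using h

theorem norm_rpow_sub_norm_apply_rpow_eq (hp : 0 < p.toReal) {f g : lp E p} {i : α}
    (hfg : ∀ j ≠ i, ‖f j‖ = ‖g j‖) :
    ‖f‖ ^ p.toReal - ‖f i‖ ^ p.toReal = ‖g‖ ^ p.toReal - ‖g i‖ ^ p.toReal := by
  classical
  rw [lp.norm_rpow_eq_tsum hp, lp.norm_rpow_eq_tsum hp,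
    ((lp.memℓp f).summable hp).tsum_eq_add_tsum_ite i,
    ((lp.memℓp g).summable hp).tsum_eq_add_tsum_ite i, add_sub_cancel_left, add_sub_cancel_left]
  refine tsum_congr fun j => ?_
  split_ifs with hj
  · rfl
  · rw [hfg j hj]

theorem norm_single_sub_rpow [DecidableEq α] (hp : 0 < p.toReal) (f : lp E p) (i : α)
    (a : E i) :
    ‖lp.single p i a - f‖ ^ p.toReal =
      ‖a - f i‖ ^ p.toReal + (‖f‖ ^ p.toReal - ‖f i‖ ^ p.toReal) := by
  rw [← norm_rpow_sub_norm_apply_rpow_eq hp (f := lp.single p i a - f) fun j hj => ?_]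
  · simp only [lp.coeFn_sub, Pi.sub_apply, lp.single_apply_self, add_sub_cancel]
  · simp only [lp.coeFn_sub, Pi.sub_apply, lp.single_apply_ne p i a hj, zero_sub,
      _root_.norm_neg]

theorem tendsto_norm_single_sub [DecidableEq α] [Fact (1 ≤ p)] (hp : p ≠ ⊤) {e : ∀ i, E i}
    (he : ∀ i, ‖e i‖ = 1) (f : lp E p) :
    Tendsto (fun i => ‖lp.single p i (e i) - f‖) cofinite
      (𝓝 ((1 + ‖f‖ ^ p.toReal) ^ (1 / p.toReal))) := by
  have hq : 0 < p.toReal := ENNReal.toReal_pos (zero_lt_one.trans_le Fact.out).ne' hp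
  have hf := tendsto_norm_apply_cofinite hp f
  have hdist : Tendsto (fun i => ‖e i - f i‖) cofinite (𝓝 1) := by
    have hsub : Tendsto (fun i => ‖e i - f i‖ - ‖e i‖) cofinite (𝓝 0) :=
      squeeze_zero_norm (fun i => by simpa using abs_norm_sub_norm_le (e i - f i) (e i)) hf
    simpa only [he, sub_add_cancel, zero_add] using hsub.add_const 1
  have hrpow : Tendsto (fun i => ‖lp.single p i (e i) - f‖ ^ p.toReal) cofinite
      (𝓝 (1 + ‖f‖ ^ p.toReal)) := by
    simp only [norm_single_sub_rpow hq]
    convert (hdist.rpow_const (Or.inr hq.le)).add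
      (tendsto_const_nhds.sub (hf.rpow_const (Or.inr hq.le))) using 2
    rw [Real.one_rpow, Real.zero_rpow hq.ne', sub_zero]
  convert hrpow.rpow_const (p := 1 / p.toReal) (Or.inr (by positivity)) using 2 with i
  rw [← Real.rpow_mul (norm_nonneg _), mul_one_div_cancel hq.ne', Real.rpow_one]

theorem two_rpow_le_of_forall_single_near [DecidableEq α] [Infinite α] [Fact (1 ≤ p)]
    (hp : p ≠ ⊤) {e : ∀ i, E i} (he : ∀ i, ‖e i‖ = 1) {F : Finset (lp E p)}
    (hF : ∀ x ∈ F, ‖x‖ = 1) {ε : ℝ} (hnear : ∀ i, ∃ x ∈ F, ‖lp.single p i (e i) - x‖ ≤ ε) :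
    2 ^ (1 / p.toReal) ≤ ε := by
  by_contra! hε
  have hfar : ∀ᶠ i in cofinite, ∀ x ∈ F, ε < ‖lp.single p i (e i) - x‖ := by
    refine (eventually_all_finset F).2 fun x hx => ?_
    have hlim := tendsto_norm_single_sub hp he x
    rw [hF x hx, Real.one_rpow, one_add_one_eq_two] at hlim
    exact hlim.eventually_const_lt hε
  obtain ⟨i, hi⟩ := hfar.exists
  obtain ⟨x, hx, hix⟩ := hnear i
  exact (hi x hx).not_ge hix

end lp

theorem two_rpow_le_thickness_lp_general
    (p : ℝ≥0∞) [Fact (1 ≤ p)] (hp : p ≠ ⊤)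
    (E : ℕ → Type*) [∀ n, NormedAddCommGroup (E n)] [∀ n, NormedSpace ℝ (E n)]
    [∀ n, Nontrivial (E n)] :
    2 ^ (1 / p.toReal) ≤ thickness (lp E p) := by
  choose e he using fun n => exists_norm_eq (E n) zero_le_one
  have hsingle : ∀ n, ‖lp.single p n (e n)‖ = 1 := fun n => by
    rw [lp.norm_single (zero_lt_one.trans_le Fact.out), he]
  exact le_thickness (hsingle 0) fun ε _ F hF hcover =>
    lp.two_rpow_le_of_forall_single_near hp he hF fun n => hcover _ (hsingle n).le

/-- `T(ℓ_p(X_n)) ≥ 2^{1/p}` for `1 ≤ p < ∞` and nonzero Banach spaces `X_n`. -/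
theorem two_rpow_le_thickness_lp
    (p : ℝ≥0∞) [Fact (1 ≤ p)] (hp : p ≠ ⊤)
    (E : ℕ → Type*) [∀ n, NormedAddCommGroup (E n)] [∀ n, NormedSpace ℝ (E n)]
    [∀ n, CompleteSpace (E n)] [∀ n, Nontrivial (E n)] :
    2 ^ (1 / p.toReal) ≤ thickness (lp E p) :=
  two_rpow_le_thickness_lp_general p hp E
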